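/- Let Φ₁ and Φ₂ be CPTP maps with unique fixed points, and suppose t_{mix,Φ₁}(ε/4)·‖Φ₁ − Φ₂‖_{1→1} ≤ ε/4. Then t_{mix,Φ₂}(ε) ≤ t_{mix,Φ₁}(ε/4). -/

import Mathlib

open Matrix
open scoped ComplexOrder

variable {n : Type*} [Fintype n] [DecidableEq n]

/-- The trace norm `‖A‖₁ = Tr √(A†A)`. -/
noncomputable def traceNorm (A : Matrix n n ℂ) : ℝ :=
  (((Matrix.posSemidef_conjTranspose_mul_self A).1.eigenvectorUnitary.1 *
    diagonal (((↑) : ℝ → ℂ) ∘ Real.sqrt ∘ (Matrix.posSemidef_conjTranspose_mul_self A).1.eigenvalues) *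
    (star (Matrix.posSemidef_conjTranspose_mul_self A).1.eigenvectorUnitary : Matrix n n ℂ)).trace).re

/-- A quantum state: positive semidefinite with unit trace. -/
def IsState (σ : Matrix n n ℂ) : Prop := σ.PosSemidef ∧ σ.trace = 1

/-- The `1 → 1` (trace norm to trace norm) induced norm of a superoperator. -/
noncomputable def oneNorm (Φ : Module.End ℂ (Matrix n n ℂ)) : ℝ :=
  sSup {c : ℝ | ∃ X : Matrix n n ℂ, traceNorm X ≤ 1 ∧ c = traceNorm (Φ X)}

/-- The mixing time of a channel `Φ` with fixed point `ρ`. -/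
noncomputable def tmix (Φ : Module.End ℂ (Matrix n n ℂ)) (ρ : Matrix n n ℂ) (ε : ℝ) : ℕ :=
  sInf {m : ℕ | ∀ σ : Matrix n n ℂ, IsState σ → traceNorm ((Φ ^ m) σ - ρ) ≤ ε}

/-!
A Hermitian matrix splits as `P - N` with `P, N ≥ 0` and `tr P + tr N = ‖P - N‖₁`, and no such
splitting has a smaller value of `tr P + tr N`. Hence the trace norm satisfies the triangle
inequality on Hermitian matrices, and positive trace-preserving maps contract it there. By
induction on `t`, using `Φ₂ᵗ⁺¹ - Φ₁ᵗ⁺¹ = (Φ₂ - Φ₁) Φ₂ᵗ + Φ₁ (Φ₂ᵗ - Φ₁ᵗ)`, this gives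
`‖Φ₂ᵗ σ - Φ₁ᵗ σ‖₁ ≤ t ‖Φ₁ - Φ₂‖₁→₁ ≤ ε/4` on states for `t = t_mix,Φ₁(ε/4)`. Since `Φ₂ᵗ ρ₂ = ρ₂`,
`‖ρ₁ - ρ₂‖₁ ≤ ‖ρ₁ - Φ₁ᵗ ρ₂‖₁ + ‖Φ₁ᵗ ρ₂ - Φ₂ᵗ ρ₂‖₁ ≤ ε/2`, and the triangle inequality through
`Φ₁ᵗ σ` and `ρ₁` bounds `‖Φ₂ᵗ σ - ρ₂‖₁` by `ε`.
-/

namespace Matrix.IsHermitian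

lemma trace_cfc {𝕜 : Type*} [RCLike 𝕜] {A : Matrix n n 𝕜} (hA : A.IsHermitian) (f : ℝ → ℝ) :
    (cfc f A).trace = ∑ i, (f (hA.eigenvalues i) : 𝕜) := by
  rw [hA.cfc_eq, IsHermitian.cfc, Unitary.conjStarAlgAut_apply, trace_mul_cycle,
    Unitary.coe_star_mul_self, one_mul, trace_diagonal]
  rfl

end Matrix.IsHermitian

lemma traceNorm_eq_re_trace_cfc_sqrt (A : Matrix n n ℂ) :
    traceNorm A = (cfc Real.sqrt (Aᴴ * A)).trace.re := by
  rw [(posSemidef_conjTranspose_mul_self A).1.cfc_eq, IsHermitian.cfc,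
    Unitary.conjStarAlgAut_apply]
  rfl

lemma traceNorm_eq_sum_abs_eigenvalues {A : Matrix n n ℂ} (hA : A.IsHermitian) :
    traceNorm A = ∑ i, |hA.eigenvalues i| := by
  have hsq : cfc Real.sqrt (Aᴴ * A) = cfc (fun x : ℝ => |x|) A := by
    rw [hA.eq, ← pow_two, ← cfc_pow_id (R := ℝ) A 2 hA.isSelfAdjoint,
      ← cfc_comp' Real.sqrt (fun x : ℝ => x ^ 2) A]
    exact cfc_congr fun x _ => Real.sqrt_sq_eq_abs x
  rw [traceNorm_eq_re_trace_cfc_sqrt, hsq, hA.trace_cfc, Complex.re_sum]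
  simp

lemma traceNorm_of_posSemidef {A : Matrix n n ℂ} (hA : A.PosSemidef) :
    traceNorm A = A.trace.re := by
  rw [traceNorm_eq_sum_abs_eigenvalues hA.isHermitian, hA.isHermitian.trace_eq_sum_eigenvalues,
    Complex.re_sum]
  simp [abs_of_nonneg (hA.eigenvalues_nonneg _)]

lemma traceNorm_sub_le_trace_add_trace {P N : Matrix n n ℂ} (hP : P.PosSemidef)
    (hN : N.PosSemidef) :
    traceNorm (P - N) ≤ P.trace.re + N.trace.re := by
  have hA : (P - N).IsHermitian := hP.isHermitian.sub hN.isHermitian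
  set U : Matrix n n ℂ := (hA.eigenvectorUnitary : Matrix n n ℂ)
  have hconj_trace : ∀ X : Matrix n n ℂ, (star U * X * U).trace = X.trace := fun X => by
    rw [trace_mul_cycle, show U * star U = 1 from Unitary.coe_mul_star_self _, one_mul]
  have hdiag : star U * (P - N) * U = diagonal (RCLike.ofReal ∘ hA.eigenvalues) := by
    rw [← hA.conjStarAlgAut_star_eigenvectorUnitary, Unitary.conjStarAlgAut_star_apply]
  have hP' := star_eq_conjTranspose U ▸ hP.conjTranspose_mul_mul_same U
  have hN' := star_eq_conjTranspose U ▸ hN.conjTranspose_mul_mul_same U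
  rw [traceNorm_eq_sum_abs_eigenvalues hA, ← hconj_trace P, ← hconj_trace N, trace, trace,
    Complex.re_sum, Complex.re_sum, ← Finset.sum_add_distrib]
  -- in the eigenbasis of `P - N`, `|λᵢ| = |pᵢ - qᵢ| ≤ pᵢ + qᵢ` for diagonal entries `pᵢ, qᵢ ≥ 0`
  refine Finset.sum_le_sum fun i _ => ?_
  have hi : hA.eigenvalues i = ((star U * P * U) i i).re - ((star U * N * U) i i).re := by
    have := congrArg (fun X => (X i i).re) hdiag
    simp only [mul_sub, sub_mul, Matrix.sub_apply, diagonal_apply_eq] at this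
    simpa using this.symm
  have hp := Complex.nonneg_iff.mp (hP'.diag_nonneg (i := i))
  have hq := Complex.nonneg_iff.mp (hN'.diag_nonneg (i := i))
  rw [diag_apply, diag_apply, hi, abs_sub_le_iff]
  constructor <;> linarith [hp.1, hq.1]

open scoped MatrixOrder in
lemma exists_posSemidef_sub_eq_traceNorm {A : Matrix n n ℂ} (hA : A.IsHermitian) :
    ∃ P N : Matrix n n ℂ, P.PosSemidef ∧ N.PosSemidef ∧ A = P - N ∧
      P.trace.re + N.trace.re = traceNorm A := by
  refine ⟨cfc (fun x : ℝ => max x 0) A, cfc (fun x : ℝ => max (-x) 0) A, ?_, ?_, ?_, ?_⟩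
  · exact nonneg_iff_posSemidef.mp (cfc_nonneg fun x _ => le_max_right _ _)
  · exact nonneg_iff_posSemidef.mp (cfc_nonneg fun x _ => le_max_right _ _)
  · rw [← cfc_sub (fun x : ℝ => max x 0) (fun x : ℝ => max (-x) 0) A]
    simp only [max_zero_sub_max_neg_zero_eq_self]
    exact (cfc_id' ℝ A).symm
  · rw [hA.trace_cfc, hA.trace_cfc, traceNorm_eq_sum_abs_eigenvalues hA, Complex.re_sum,
      Complex.re_sum, ← Finset.sum_add_distrib]
    simp [max_zero_add_max_neg_zero_eq_abs_self]

lemma traceNorm_neg (A : Matrix n n ℂ) : traceNorm (-A) = traceNorm A := by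
  simp only [traceNorm_eq_re_trace_cfc_sqrt, conjTranspose_neg, neg_mul_neg]

lemma traceNorm_sub_rev (A B : Matrix n n ℂ) : traceNorm (A - B) = traceNorm (B - A) := by
  rw [← traceNorm_neg, neg_sub]

lemma traceNorm_add_le {A B : Matrix n n ℂ} (hA : A.IsHermitian) (hB : B.IsHermitian) :
    traceNorm (A + B) ≤ traceNorm A + traceNorm B := by
  obtain ⟨P₁, N₁, hP₁, hN₁, rfl, h₁⟩ := exists_posSemidef_sub_eq_traceNorm hA
  obtain ⟨P₂, N₂, hP₂, hN₂, rfl, h₂⟩ := exists_posSemidef_sub_eq_traceNorm hB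
  calc traceNorm (P₁ - N₁ + (P₂ - N₂)) = traceNorm ((P₁ + P₂) - (N₁ + N₂)) := by
        rw [add_sub_add_comm]
    _ ≤ (P₁ + P₂).trace.re + (N₁ + N₂).trace.re :=
        traceNorm_sub_le_trace_add_trace (hP₁.add hP₂) (hN₁.add hN₂)
    _ = traceNorm (P₁ - N₁) + traceNorm (P₂ - N₂) := by
        rw [← h₁, ← h₂, trace_add, trace_add, Complex.add_re, Complex.add_re]
        ring

lemma traceNorm_sub_le_traceNorm_sub_add_traceNorm_sub {A B C : Matrix n n ℂ}
    (hA : A.IsHermitian) (hB : B.IsHermitian) (hC : C.IsHermitian) :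
    traceNorm (A - C) ≤ traceNorm (A - B) + traceNorm (B - C) := by
  simpa only [sub_add_sub_cancel] using traceNorm_add_le (hA.sub hB) (hB.sub hC)

omit [DecidableEq n] in
lemma IsState.isHermitian {σ : Matrix n n ℂ} (hσ : IsState σ) : σ.IsHermitian :=
  hσ.1.isHermitian

lemma traceNorm_of_isState {σ : Matrix n n ℂ} (hσ : IsState σ) : traceNorm σ = 1 := by
  rw [traceNorm_of_posSemidef hσ.1, hσ.2, Complex.one_re]

structure IsPositiveTracePreserving (Φ : Module.End ℂ (Matrix n n ℂ)) : Prop where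
  posSemidef_map : ∀ σ : Matrix n n ℂ, σ.PosSemidef → (Φ σ).PosSemidef
  trace_map : ∀ σ : Matrix n n ℂ, (Φ σ).trace = σ.trace

namespace IsPositiveTracePreserving

variable {Φ Ψ : Module.End ℂ (Matrix n n ℂ)}

omit [DecidableEq n] in
lemma one : IsPositiveTracePreserving (1 : Module.End ℂ (Matrix n n ℂ)) :=
  ⟨fun _ hσ => hσ, fun _ => rfl⟩

omit [DecidableEq n] in
lemma mul (hΦ : IsPositiveTracePreserving Φ) (hΨ : IsPositiveTracePreserving Ψ) :
    IsPositiveTracePreserving (Φ * Ψ) :=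
  ⟨fun σ hσ => hΦ.posSemidef_map _ (hΨ.posSemidef_map σ hσ),
    fun σ => (hΦ.trace_map _).trans (hΨ.trace_map σ)⟩

omit [DecidableEq n] in
lemma pow (hΦ : IsPositiveTracePreserving Φ) (k : ℕ) : IsPositiveTracePreserving (Φ ^ k) := by
  induction k with
  | zero => exact one
  | succ k ih => rw [pow_succ]; exact ih.mul hΦ

omit [DecidableEq n] in
lemma isState_map (hΦ : IsPositiveTracePreserving Φ) {σ : Matrix n n ℂ} (hσ : IsState σ) :
    IsState (Φ σ) :=
  ⟨hΦ.posSemidef_map σ hσ.1, (hΦ.trace_map σ).trans hσ.2⟩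

lemma traceNorm_map_le (hΦ : IsPositiveTracePreserving Φ) {A : Matrix n n ℂ}
    (hA : A.IsHermitian) : traceNorm (Φ A) ≤ traceNorm A := by
  obtain ⟨P, N, hP, hN, rfl, hPN⟩ := exists_posSemidef_sub_eq_traceNorm hA
  calc traceNorm (Φ (P - N)) ≤ (Φ P).trace.re + (Φ N).trace.re := by
        rw [map_sub]
        exact traceNorm_sub_le_trace_add_trace (hΦ.posSemidef_map P hP) (hΦ.posSemidef_map N hN)
    _ = traceNorm (P - N) := by rw [hΦ.trace_map, hΦ.trace_map, hPN]

end IsPositiveTracePreserving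

section Frobenius

attribute [local instance] Matrix.frobeniusNormedAddCommGroup Matrix.frobeniusNormedSpace

noncomputable def singularValues (A : Matrix n n ℂ) (i : n) : ℝ :=
  √((posSemidef_conjTranspose_mul_self A).1.eigenvalues i)

lemma singularValues_nonneg (A : Matrix n n ℂ) (i : n) : 0 ≤ singularValues A i :=
  Real.sqrt_nonneg _

lemma traceNorm_eq_sum_singularValues (A : Matrix n n ℂ) :
    traceNorm A = ∑ i, singularValues A i := by
  rw [traceNorm_eq_re_trace_cfc_sqrt, (posSemidef_conjTranspose_mul_self A).1.trace_cfc,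
    Complex.re_sum]
  simp [singularValues]

lemma sum_singularValues_sq (A : Matrix n n ℂ) : ∑ i, singularValues A i ^ 2 = ‖A‖ ^ 2 := by
  have hB := posSemidef_conjTranspose_mul_self A
  calc ∑ i, singularValues A i ^ 2 = (Aᴴ * A).trace.re := by
        simp [singularValues, Real.sq_sqrt (hB.eigenvalues_nonneg _), hB.1.trace_eq_sum_eigenvalues]
    _ = ∑ i, ∑ j, ‖A i j‖ ^ 2 := by
        rw [trace, Complex.re_sum, Finset.sum_comm]
        refine Finset.sum_congr rfl fun j _ => ?_
        simp [mul_apply, Complex.re_sum, Complex.conj_mul', ← Complex.ofReal_pow]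
    _ = ‖A‖ ^ 2 := by
        rw [frobenius_norm_def, ← Real.sqrt_eq_rpow, Real.sq_sqrt (by positivity)]
        simp

lemma norm_le_traceNorm (A : Matrix n n ℂ) : ‖A‖ ≤ traceNorm A := by
  rw [traceNorm_eq_sum_singularValues]
  refine le_of_pow_le_pow_left₀ two_ne_zero
    (Finset.sum_nonneg fun i _ => singularValues_nonneg A i) ?_
  rw [← sum_singularValues_sq]
  exact Finset.sum_sq_le_sq_sum_of_nonneg fun i _ => singularValues_nonneg A i

lemma traceNorm_le_card_mul_norm (A : Matrix n n ℂ) : traceNorm A ≤ Fintype.card n * ‖A‖ := by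
  have hle : ∀ i, singularValues A i ≤ ‖A‖ := fun i => by
    refine le_of_pow_le_pow_left₀ two_ne_zero (norm_nonneg A) ?_
    rw [← sum_singularValues_sq]
    exact Finset.single_le_sum (fun j _ => sq_nonneg (singularValues A j)) (Finset.mem_univ i)
  rw [traceNorm_eq_sum_singularValues]
  simpa using Finset.sum_le_sum fun i (_ : i ∈ Finset.univ) => hle i

lemma bddAbove_traceNorm_map (Ψ : Module.End ℂ (Matrix n n ℂ)) :
    BddAbove {c : ℝ | ∃ X : Matrix n n ℂ, traceNorm X ≤ 1 ∧ c = traceNorm (Ψ X)} := by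
  obtain ⟨C, hC, hΨ⟩ :=
    SemilinearMapClass.bound_of_continuous Ψ (LinearMap.continuous_of_finiteDimensional Ψ)
  refine ⟨Fintype.card n * C, ?_⟩
  rintro _ ⟨X, hX, rfl⟩
  calc traceNorm (Ψ X) ≤ Fintype.card n * ‖Ψ X‖ := traceNorm_le_card_mul_norm _
    _ ≤ Fintype.card n * (C * ‖X‖) := by gcongr; exact hΨ X
    _ ≤ Fintype.card n * C := by
        gcongr
        exact mul_le_of_le_one_right hC.le ((norm_le_traceNorm X).trans hX)

end Frobenius

lemma traceNorm_map_le_oneNorm (Ψ : Module.End ℂ (Matrix n n ℂ)) {X : Matrix n n ℂ}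
    (hX : traceNorm X ≤ 1) : traceNorm (Ψ X) ≤ oneNorm Ψ :=
  le_csSup (bddAbove_traceNorm_map Ψ) ⟨X, hX, rfl⟩

lemma traceNorm_pow_apply_sub_pow_apply_le {Φ₁ Φ₂ : Module.End ℂ (Matrix n n ℂ)}
    (h₁ : IsPositiveTracePreserving Φ₁) (h₂ : IsPositiveTracePreserving Φ₂) (k : ℕ)
    {σ : Matrix n n ℂ} (hσ : IsState σ) :
    traceNorm ((Φ₂ ^ k) σ - (Φ₁ ^ k) σ) ≤ k * oneNorm (Φ₁ - Φ₂) := by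
  induction k with
  | zero => simp [traceNorm_of_posSemidef PosSemidef.zero]
  | succ k ih =>
    have hτ₁ := (h₁.pow k).isState_map hσ
    have hτ₂ := (h₂.pow k).isState_map hσ
    rw [pow_succ', pow_succ', Module.End.mul_apply, Module.End.mul_apply]
    calc traceNorm (Φ₂ ((Φ₂ ^ k) σ) - Φ₁ ((Φ₁ ^ k) σ))
        ≤ traceNorm (Φ₂ ((Φ₂ ^ k) σ) - Φ₁ ((Φ₂ ^ k) σ))
          + traceNorm (Φ₁ ((Φ₂ ^ k) σ) - Φ₁ ((Φ₁ ^ k) σ)) :=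
          traceNorm_sub_le_traceNorm_sub_add_traceNorm_sub (h₂.isState_map hτ₂).isHermitian
            (h₁.isState_map hτ₂).isHermitian (h₁.isState_map hτ₁).isHermitian
      _ ≤ oneNorm (Φ₁ - Φ₂) + k * oneNorm (Φ₁ - Φ₂) := by
          gcongr
          · rw [traceNorm_sub_rev, ← LinearMap.sub_apply]
            exact traceNorm_map_le_oneNorm _ (traceNorm_of_isState hτ₂).le
          · rw [← map_sub]
            exact (h₁.traceNorm_map_le (hτ₂.isHermitian.sub hτ₁.isHermitian)).trans ih
      _ = (k + 1 : ℕ) * oneNorm (Φ₁ - Φ₂) := by push_cast; ring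

theorem mixing_time_comparison_general (Φ₁ Φ₂ : Module.End ℂ (Matrix n n ℂ))
    (ρ₁ ρ₂ : Matrix n n ℂ)
    (hpos₁ : ∀ σ : Matrix n n ℂ, σ.PosSemidef → (Φ₁ σ).PosSemidef)
    (hpos₂ : ∀ σ : Matrix n n ℂ, σ.PosSemidef → (Φ₂ σ).PosSemidef)
    (htp₁ : ∀ σ : Matrix n n ℂ, (Φ₁ σ).trace = σ.trace)
    (htp₂ : ∀ σ : Matrix n n ℂ, (Φ₂ σ).trace = σ.trace)
    (hρ₁ : IsState ρ₁)
    (hρ₂ : IsState ρ₂) (hfix₂ : Φ₂ ρ₂ = ρ₂)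
    (ε : ℝ)
    (hmix : {m : ℕ | ∀ σ : Matrix n n ℂ, IsState σ →
      traceNorm ((Φ₁ ^ m) σ - ρ₁) ≤ ε / 4}.Nonempty)
    (hclose : (tmix Φ₁ ρ₁ (ε / 4) : ℝ) * oneNorm (Φ₁ - Φ₂) ≤ ε / 4) :
    tmix Φ₂ ρ₂ ε ≤ tmix Φ₁ ρ₁ (ε / 4) := by
  have h₁ : IsPositiveTracePreserving Φ₁ := ⟨hpos₁, htp₁⟩
  have h₂ : IsPositiveTracePreserving Φ₂ := ⟨hpos₂, htp₂⟩
  set t := tmix Φ₁ ρ₁ (ε / 4)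
  have hmixed : ∀ σ, IsState σ → traceNorm ((Φ₁ ^ t) σ - ρ₁) ≤ ε / 4 := Nat.sInf_mem hmix
  have hnear : ∀ σ, IsState σ → traceNorm ((Φ₂ ^ t) σ - (Φ₁ ^ t) σ) ≤ ε / 4 := fun σ hσ =>
    (traceNorm_pow_apply_sub_pow_apply_le h₁ h₂ t hσ).trans hclose
  have hfix : (Φ₂ ^ t) ρ₂ = ρ₂ := by
    rw [Module.End.pow_apply]; exact Function.IsFixedPt.iterate hfix₂ t
  have hρ : traceNorm (ρ₁ - ρ₂) ≤ ε / 2 := by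
    have hτ₁ := ((h₁.pow t).isState_map hρ₂).isHermitian
    have hτ₂ := ((h₂.pow t).isState_map hρ₂).isHermitian
    have htri := traceNorm_sub_le_traceNorm_sub_add_traceNorm_sub hρ₁.isHermitian hτ₁ hτ₂
    have hmixed₂ := hmixed ρ₂ hρ₂
    have hnear₂ := hnear ρ₂ hρ₂
    rw [traceNorm_sub_rev] at hmixed₂ hnear₂
    rw [hfix] at htri hnear₂
    linarith
  refine Nat.sInf_le fun σ hσ => ?_
  have hτ₁ := ((h₁.pow t).isState_map hσ).isHermitian
  have hτ₂ := ((h₂.pow t).isState_map hσ).isHermitian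
  have h₂₁ := traceNorm_sub_le_traceNorm_sub_add_traceNorm_sub hτ₂ hτ₁ hρ₂.isHermitian
  have h₁₂ := traceNorm_sub_le_traceNorm_sub_add_traceNorm_sub hτ₁ hρ₁.isHermitian hρ₂.isHermitian
  linarith [hnear σ hσ, hmixed σ hσ]

/-- If `t_{mix,Φ₁}(ε/4)·‖Φ₁ − Φ₂‖_{1→1} ≤ ε/4 `, then `t_{mix,Φ₂}(ε) ≤ t_{mix,Φ₁}(ε/4)`. -/
theorem mixing_time_comparison (Φ₁ Φ₂ : Module.End ℂ (Matrix n n ℂ))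
    (ρ₁ ρ₂ : Matrix n n ℂ)
    (hpos₁ : ∀ σ : Matrix n n ℂ, σ.PosSemidef → (Φ₁ σ).PosSemidef)
    (hpos₂ : ∀ σ : Matrix n n ℂ, σ.PosSemidef → (Φ₂ σ).PosSemidef)
    (htp₁ : ∀ σ : Matrix n n ℂ, (Φ₁ σ).trace = σ.trace)
    (htp₂ : ∀ σ : Matrix n n ℂ, (Φ₂ σ).trace = σ.trace)
    (hρ₁ : IsState ρ₁) (hfix₁ : Φ₁ ρ₁ = ρ₁)
    (huniq₁ : ∀ σ : Matrix n n ℂ, IsState σ → Φ₁ σ = σ → σ = ρ₁)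
    (hρ₂ : IsState ρ₂) (hfix₂ : Φ₂ ρ₂ = ρ₂)
    (huniq₂ : ∀ σ : Matrix n n ℂ, IsState σ → Φ₂ σ = σ → σ = ρ₂)
    (ε : ℝ) (hε : 0 < ε)
    (hmix : {m : ℕ | ∀ σ : Matrix n n ℂ, IsState σ →
      traceNorm ((Φ₁ ^ m) σ - ρ₁) ≤ ε / 4}.Nonempty)
    (hclose : (tmix Φ₁ ρ₁ (ε / 4) : ℝ) * oneNorm (Φ₁ - Φ₂) ≤ ε / 4) :
    tmix Φ₂ ρ₂ ε ≤ tmix Φ₁ ρ₁ (ε / 4) :=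
  mixing_time_comparison_general Φ₁ Φ₂ ρ₁ ρ₂ hpos₁ hpos₂ htp₁ htp₂ hρ₁ hρ₂ hfix₂ ε hmix hclose
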